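/- Let v₁,…,v_μ ∈ ℂ^m be linearly independent vectors with v_i · v_j = 0 for all i,j (isotropic under the bilinear dot product). Then 2μ ≤ m and there exists R ∈ O(m) such that each R v_i lies in the complex span of {e_{2j-1} + i e_{2j} : 1 ≤ j ≤ i}, with the coefficient of e_{2i-1} + i e_{2i} in R v_i nonzero. -/

import Mathlib

/-!
Gram–Schmidt for the Hermitian product turns `v` into an orthonormal family `w` with the same
flag of spans, so `v i = ∑_{j ≤ i} c_j w_j` with `c_i ≠ 0`, and `w` is still isotropic for the
bilinear product. Writing `w_j = x_j + i y_j`, Hermitian orthonormality and isotropy together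
say that the `2μ` real vectors `√2 x_j, √2 y_j` are orthonormal in `ℝ^m`. Hence `2μ ≤ m`, and
completing them to an orthonormal basis gives an orthogonal `R` with `R (√2 x_j) = e_{2j}` and
`R (√2 y_j) = e_{2j+1}`, so that `R w_j = (e_{2j} + i e_{2j+1}) / √2`.
-/

open Matrix Complex ComplexConjugate Finset InnerProductSpace

theorem LinearMap.eq_zero_of_mem_span₂ {R M N P : Type*} [CommSemiring R] [AddCommMonoid M]
    [AddCommMonoid N] [AddCommMonoid P] [Module R M] [Module R N] [Module R P]
    (B : M →ₗ[R] N →ₗ[R] P) {s : Set M} {t : Set N}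
    (h : ∀ x ∈ s, ∀ y ∈ t, B x y = 0)
    {x : M} {y : N} (hx : x ∈ Submodule.span R s) (hy : y ∈ Submodule.span R t) :
    B x y = 0 := by
  have hy' : ∀ x ∈ s, B x y = 0 := fun x hx' => LinearMap.eqOn_span' (g := 0) (h x hx') hy
  exact LinearMap.eqOn_span' (f := B.flip y) (g := 0) hy' hx

namespace InnerProductSpace

variable {𝕜 E ι : Type*} [RCLike 𝕜] [NormedAddCommGroup E] [InnerProductSpace 𝕜 E]
  [LinearOrder ι] [LocallyFiniteOrderBot ι] [WellFoundedLT ι]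

theorem apply_gramSchmidtNormed_eq_zero {P : Type*} [AddCommMonoid P] [Module 𝕜 P]
    (B : E →ₗ[𝕜] E →ₗ[𝕜] P) {f : ι → E} (hf : ∀ i j, B (f i) (f j) = 0) (i j : ι) :
    B (gramSchmidtNormed 𝕜 f i) (gramSchmidtNormed 𝕜 f j) = 0 := by
  have hmem : ∀ i, gramSchmidtNormed 𝕜 f i ∈ Submodule.span 𝕜 (Set.range f) := fun i => by
    rw [← span_gramSchmidt, ← span_gramSchmidtNormed_range]
    exact Submodule.subset_span ⟨i, rfl⟩
  exact B.eq_zero_of_mem_span₂ (by rintro _ ⟨i, rfl⟩ _ ⟨j, rfl⟩; exact hf i j) (hmem i) (hmem j)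

theorem exists_triangular_sum_gramSchmidtNormed [Fintype ι] {f : ι → E}
    (hf : LinearIndependent 𝕜 f) (i : ι) :
    ∃ c : ι → 𝕜, c i ≠ 0 ∧ (∀ j, i < j → c j = 0) ∧
      f i = ∑ j, c j • gramSchmidtNormed 𝕜 f j := by
  have hmem : f i ∈ Submodule.span 𝕜 (Set.range (gramSchmidtNormed 𝕜 f)) := by
    rw [span_gramSchmidtNormed_range, span_gramSchmidt]
    exact Submodule.subset_span ⟨i, rfl⟩
  obtain ⟨c, hc⟩ := (Submodule.mem_span_range_iff_exists_fun 𝕜).1 hmem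
  have hc_inner : ∀ j, c j = inner 𝕜 (gramSchmidtNormed 𝕜 f j) (f i) := fun j => by
    rw [← hc, (gramSchmidtNormed_orthonormal hf).inner_right_fintype]
  have hc_upper : ∀ j, i < j → c j = 0 := fun j hij => by
    simp [hc_inner, gramSchmidtNormed, inner_smul_left, gramSchmidt_inv_triangular 𝕜 f hij]
  refine ⟨c, fun hci => ?_, hc_upper, hc.symm⟩
  have hlower : f i ∈ Submodule.span 𝕜 (gramSchmidtNormed 𝕜 f '' Set.Iio i) := by
    rw [← hc]
    refine Submodule.sum_mem _ fun j _ => ?_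
    rcases lt_trichotomy j i with hji | rfl | hij
    · exact Submodule.smul_mem _ _ (Submodule.subset_span ⟨j, hji, rfl⟩)
    · simp [hci]
    · simp [hc_upper j hij]
  rw [span_gramSchmidtNormed, span_gramSchmidt_Iio] at hlower
  exact hf.notMem_span_image Set.self_notMem_Iio hlower

end InnerProductSpace

noncomputable def reImParts {ι n : Type*} (z : ι → EuclideanSpace ℂ n) (p : ι × Fin 2) :
    EuclideanSpace ℝ n :=
  WithLp.toLp 2 fun k => √2 * ![(z p.1 k).re, (z p.1 k).im] p.2

theorem orthonormal_reImParts {ι n : Type*} [Fintype n] {z : ι → EuclideanSpace ℂ n}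
    (hz : Orthonormal ℂ z) (hnull : ∀ i j, ∑ k, z i k * z j k = 0) :
    Orthonormal ℝ (reImParts z) := by
  classical
  have hherm : ∀ i j, ∑ k, conj (z i k) * z j k = if i = j then 1 else 0 := fun i j => by
    rw [← orthonormal_iff_ite.1 hz i j, PiLp.inner_apply]
    simp [RCLike.inner_apply, mul_comm]
  rw [orthonormal_iff_ite]
  rintro ⟨i, a⟩ ⟨j, b⟩
  -- Each real Gram entry is a linear combination of these four relations.
  have h1 := congrArg re (hnull i j)
  have h2 := congrArg im (hnull i j)
  have h3 := congrArg re (hherm i j)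
  have h4 := congrArg im (hherm i j)
  simp only [re_sum, im_sum, mul_re, mul_im, conj_re, conj_im, sum_add_distrib,
    sum_sub_distrib, apply_ite re, apply_ite im, one_re, one_im, zero_re, zero_im, ite_self,
    neg_mul, sum_neg_distrib] at h1 h2 h3 h4
  have hs : √2 * √2 = 2 := Real.mul_self_sqrt zero_le_two
  fin_cases a <;> fin_cases b <;>
    simp only [reImParts, PiLp.inner_apply, RCLike.inner_apply, Real.ringHom_apply,
      mul_mul_mul_comm, hs, ← mul_sum, Prod.mk.injEq, Fin.isValue, cons_val_zero, cons_val_one,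
      cons_val_fin_one, Fin.zero_eta, Fin.mk_one, zero_ne_one, one_ne_zero, and_true, and_false,
      ↓reduceIte, mul_eq_zero, OfNat.ofNat_ne_zero, false_or] <;>
    simp only [mul_comm ((z j).ofLp _).re, mul_comm ((z j).ofLp _).im] <;>
    split_ifs at * <;> linarith

theorem Orthonormal.exists_mem_orthogonalGroup_mulVec_eq_single {ι κ : Type*} [Fintype κ]
    [DecidableEq κ] (f : ι ↪ κ) {G : ι → EuclideanSpace ℝ κ} (hG : Orthonormal ℝ G) :
    ∃ R ∈ orthogonalGroup κ ℝ, ∀ i, R *ᵥ G i = Pi.single (f i) 1 := by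
  have hext : Orthonormal ℝ ((Set.range f).domRestrict (Function.extend f G 0)) := by
    convert hG.comp _ (Equiv.ofInjective f f.injective).symm.injective
    ext ⟨_, i, rfl⟩ : 1
    simpa using f.injective.extend_apply G 0 i
  obtain ⟨b, hb⟩ := hext.exists_orthonormalBasis_extension_of_card_eq (by simp)
  refine ⟨b.toBasis.toMatrix (EuclideanSpace.basisFun κ ℝ).toBasis, by
    simpa using b.toMatrix_orthonormalBasis_mem_orthogonal (EuclideanSpace.basisFun κ ℝ),
    fun i => ?_⟩
  have hbi : G i = b (f i) := by simpa [f.injective.extend_apply] using (hb (f i) ⟨i, rfl⟩).symm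
  have hrepr : (G i).ofLp = (EuclideanSpace.basisFun κ ℝ).toBasis.repr (G i) := by ext; simp
  rw [hrepr, Module.Basis.toMatrix_mulVec_repr, hbi, ← b.coe_toBasis, Module.Basis.repr_self,
    Finsupp.single_eq_pi_single]

theorem Matrix.map_ofReal_mulVec {m n : Type*} [Fintype n] (A : Matrix m n ℝ) (z : n → ℂ) :
    A.map ofReal *ᵥ z =
      fun k => ((A *ᵥ fun l => (z l).re) k : ℂ) + ((A *ᵥ fun l => (z l).im) k : ℂ) * I := by
  ext k
  simp only [mulVec, dotProduct, map_apply, ofReal_sum, ofReal_mul, Finset.sum_mul,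
    ← Finset.sum_add_distrib]
  refine Finset.sum_congr rfl fun l _ => ?_
  conv_lhs => rw [← re_add_im (z l)]
  ring

/-- The null vector `e_{2j-1} + i e_{2j}` of the paper, with `j` and the coordinates of `ℂ^m`
counted from `0`. -/
def nullVector (m j : ℕ) : Fin m → ℂ :=
  fun k => (if (k : ℕ) = 2 * j then 1 else 0) + I * (if (k : ℕ) = 2 * j + 1 then 1 else 0)

theorem exists_orthogonal_mulVec_eq_nullVector {m μ : ℕ} {w : Fin μ → EuclideanSpace ℂ (Fin m)}
    (hw : Orthonormal ℂ w) (hnull : ∀ i j, ∑ k, w i k * w j k = 0) :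
    2 * μ ≤ m ∧ ∃ R : Matrix (Fin m) (Fin m) ℝ, Rᵀ * R = 1 ∧
      ∀ j, R.map ofReal *ᵥ w j = (√2 : ℂ)⁻¹ • nullVector m j := by
  have hG := orthonormal_reImParts hw hnull
  have h2μ : μ * 2 ≤ m := by simpa using hG.linearIndependent.fintype_card_le_finrank
  -- `finProdFinEquiv (j, a) = a + 2 * j`: real parts go to even, imaginary parts to odd slots.
  obtain ⟨R, hR, hRG⟩ := hG.exists_mem_orthogonalGroup_mulVec_eq_single
    (finProdFinEquiv.toEmbedding.trans (Fin.castLEEmb h2μ))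
  refine ⟨by omega, R, (mem_orthogonalGroup_iff' _ _).1 hR, fun j => ?_⟩
  have hre : (fun l => (w j l).re) = (√2)⁻¹ • (reImParts w (j, 0)).ofLp := by
    ext; simp [reImParts]
  have him : (fun l => (w j l).im) = (√2)⁻¹ • (reImParts w (j, 1)).ofLp := by
    ext; simp [reImParts]
  rw [map_ofReal_mulVec, hre, him, mulVec_smul, mulVec_smul, hRG, hRG]
  ext k
  simp only [nullVector, Function.Embedding.trans_apply, Function.Embedding.coeFn_mk,
    Fin.castLEEmb_apply, Pi.smul_apply, Pi.single_apply, Fin.ext_iff, Fin.val_castLE,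
    finProdFinEquiv_apply_val, Fin.isValue, Fin.coe_ofNat_eq_mod, Nat.zero_mod, Nat.mod_succ,
    zero_add, add_comm 1, smul_eq_mul, mul_ite, mul_one, mul_zero]
  split_ifs <;> push_cast <;> ring

/-- a family of `μ` linearly independent, mutually isotropic/orthogonal
vectors of `ℂ^m` (for the bilinear dot product) forces `2μ ≤ m` and can be brought by a
real orthogonal matrix into upper-triangular form with respect to the null basis
`e_{2j-1} + i e_{2j}`, with nonzero diagonal coefficients. -/
theorem stmt5 (m μ : ℕ) (v : Fin μ → Fin m → ℂ)
    (hli : LinearIndependent ℂ v)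
    (hnull : ∀ i j, ∑ k, v i k * v j k = 0) :
    2 * μ ≤ m ∧ ∃ R : Matrix (Fin m) (Fin m) ℝ, Rᵀ * R = 1 ∧
      ∀ i : Fin μ, ∃ c : Fin μ → ℂ, c i ≠ 0 ∧ (∀ j, i < j → c j = 0) ∧
        (R.map Complex.ofReal).mulVec (v i) =
          ∑ j : Fin μ, c j • (fun k : Fin m =>
            (if (k : ℕ) = 2 * (j : ℕ) then (1 : ℂ) else 0) +
              Complex.I * (if (k : ℕ) = 2 * (j : ℕ) + 1 then 1 else 0)) := by
  let e := WithLp.linearEquiv 2 ℂ (Fin m → ℂ)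
  have hli' : LinearIndependent ℂ (e.symm ∘ v) := hli.map' e.symm.toLinearMap e.symm.ker
  obtain ⟨h2μ, R, hR, hRw⟩ := exists_orthogonal_mulVec_eq_nullVector
    (gramSchmidtNormed_orthonormal hli') (apply_gramSchmidtNormed_eq_zero
      ((dotProductBilin ℂ ℂ).compl₁₂ e.toLinearMap e.toLinearMap) hnull)
  refine ⟨h2μ, R, hR, fun i => ?_⟩
  obtain ⟨c, hci, hc_upper, hvi⟩ := exists_triangular_sum_gramSchmidtNormed hli' i
  refine ⟨fun j => c j / √2, by simpa using hci, fun j hij => by simp [hc_upper j hij], ?_⟩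
  have hvi' : v i = ∑ j, c j • (gramSchmidtNormed ℂ (e.symm ∘ v) j).ofLp := by
    simpa [e] using congrArg e hvi
  simp only [hvi', mulVec_sum, mulVec_smul, hRw, smul_smul, div_eq_mul_inv]
  rfl
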